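/- Let F be a free group, N ⊴ F, and 𝒦 a class of groups. If F/N is 𝒦-approximable, then N is a 𝒦-separated normal subgroup of F: for every n ∈ ℕ, every finite Y ⊆ F \ N, and every finite Φ ⊆ N, there exists a homomorphism φ : F → H with H ∈ 𝒦 such that φ(Y) ∩ Cₙ(φ(Φ), H) = ∅. -/

import Mathlib

/-!
Extend `ψ ∘ π` from the generators to a homomorphism `φ : F → H`. Reading the reduced word of
`w` letter by letter, each letter multiplies the error `φ w * (ψ (π w))⁻¹` by one defect of `ψ`
(or its inverse) on the finite set of images of prefixes and generators, so for words of length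
at most `m` the error is a product of `m` defects. For `f ∈ Φ ⊆ N` the error is `φ f` itself,
so `φ y ∈ Cₙ(φ Φ)` would put `ψ (π y)` into `C_{m(n+1)}` of the defects, although `π y ≠ 1`.
Counting works because `Cₙ X` is the `n`-th pointwise power of the conjugates of `X ∪ X⁻¹`.
-/

def Cn {H : Type*} [Group H] (n : ℕ) (X : Set H) : Set H :=
  {w | ∃ x g : Fin n → H, (∀ i, x i ∈ X ∨ (x i)⁻¹ ∈ X) ∧
    w = (List.ofFn fun i => (g i)⁻¹ * x i * g i).prod}

open Pointwise Group

section Consequences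

variable {H : Type*} [Group H]

theorem Cn_eq_pow (n : ℕ) (X : Set H) : Cn n X = conjugatesOfSet (X ∪ X⁻¹) ^ n := by
  ext w
  rw [Set.mem_pow]
  constructor
  · rintro ⟨x, g, hx, rfl⟩
    exact ⟨fun i => ⟨_, mem_conjugatesOfSet_iff.2
      ⟨x i, hx i, isConj_iff.2 ⟨(g i)⁻¹, by rw [inv_inv]⟩⟩⟩, rfl⟩
  · rintro ⟨f, rfl⟩
    choose x hx hconj using fun i => mem_conjugatesOfSet_iff.1 (f i).2
    choose c hc using fun i => isConj_iff.1 (hconj i)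
    refine ⟨x, fun i => (c i)⁻¹, hx, ?_⟩
    simp only [inv_inv, hc]

theorem inv_mem_conjugatesOfSet_union_inv {X : Set H} {x : H}
    (hx : x ∈ conjugatesOfSet (X ∪ X⁻¹)) : x⁻¹ ∈ conjugatesOfSet (X ∪ X⁻¹) := by
  obtain ⟨a, ha, hax⟩ := mem_conjugatesOfSet_iff.1 hx
  obtain ⟨c, rfl⟩ := isConj_iff.1 hax
  refine mem_conjugatesOfSet_iff.2 ⟨a⁻¹, ?_, isConj_iff.2 ⟨c, by group⟩⟩
  simpa [or_comm] using ha

theorem inv_mem_pow_conjugatesOfSet_union_inv {X : Set H} {n : ℕ} {x : H}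
    (hx : x ∈ conjugatesOfSet (X ∪ X⁻¹) ^ n) : x⁻¹ ∈ conjugatesOfSet (X ∪ X⁻¹) ^ n := by
  have hinv : conjugatesOfSet (X ∪ X⁻¹) ⊆ (conjugatesOfSet (X ∪ X⁻¹))⁻¹ :=
    fun _ hy => inv_mem_conjugatesOfSet_union_inv hy
  rw [← Set.mem_inv, ← inv_pow]
  exact Set.pow_subset_pow_left hinv hx

theorem conj_mem_pow_conjugatesOfSet {s : Set H} {n : ℕ} {x : H}
    (hx : x ∈ conjugatesOfSet s ^ n) (c : H) : c * x * c⁻¹ ∈ conjugatesOfSet s ^ n := by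
  have himage : MulAut.conj c '' conjugatesOfSet s ⊆ conjugatesOfSet s := by
    rintro _ ⟨y, hy, rfl⟩
    exact conj_mem_conjugatesOfSet hy
  rw [← MulAut.conj_apply]
  exact Set.pow_subset_pow_left himage (Set.image_pow (MulAut.conj c) _ n ▸ ⟨x, hx, rfl⟩)

theorem Cn_subset_pow_mul {X Z : Set H} {m : ℕ} (hZ : Z ⊆ conjugatesOfSet (X ∪ X⁻¹) ^ m)
    (n : ℕ) : Cn n Z ⊆ conjugatesOfSet (X ∪ X⁻¹) ^ (m * n) := by
  have hclosed : conjugatesOfSet (Z ∪ Z⁻¹) ⊆ conjugatesOfSet (X ∪ X⁻¹) ^ m := by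
    intro y hy
    obtain ⟨a, ha, hay⟩ := mem_conjugatesOfSet_iff.1 hy
    obtain ⟨c, rfl⟩ := isConj_iff.1 hay
    refine conj_mem_pow_conjugatesOfSet ?_ c
    rcases ha with ha | ha
    · exact hZ ha
    · simpa using inv_mem_pow_conjugatesOfSet_union_inv (hZ ha)
  rw [Cn_eq_pow, pow_mul]
  exact Set.pow_subset_pow_left hclosed

end Consequences

section Approximation

variable {G H : Type*} [Group G] [Group H]

def defectSet (ψ : G → H) (Φ : Set G) : Set H :=
  {z | ∃ g h, g ∈ Φ ∧ h ∈ Φ ∧ g * h ∈ Φ ∧ z = ψ g * ψ h * (ψ (g * h))⁻¹}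

theorem one_mem_defectSet {ψ : G → H} (hψ : ψ 1 = 1) {Φ : Set G} (hΦ : (1 : G) ∈ Φ) :
    (1 : H) ∈ defectSet ψ Φ :=
  ⟨1, 1, hΦ, hΦ, by rwa [mul_one], by simp [hψ]⟩

variable {α : Type*}

theorem FreeGroup.mk_append_singleton (L : List (α × Bool)) (a : α) (b : Bool) :
    FreeGroup.mk (L ++ [(a, b)]) = FreeGroup.mk L * cond b (FreeGroup.of a) (FreeGroup.of a)⁻¹ := by
  cases b <;> simp [← FreeGroup.mul_mk, FreeGroup.of, FreeGroup.inv_mk, FreeGroup.invRev]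

theorem lift_mul_inv_mem_pow_defectSet (π : FreeGroup α →* G) {ψ : G → H} (hψ : ψ 1 = 1)
    {P : Set G} (L : List (α × Bool)) (hpre : ∀ L', L' <+: L → π (FreeGroup.mk L') ∈ P)
    (hlet : ∀ p ∈ L, π (FreeGroup.of p.1) ∈ P) :
    FreeGroup.lift (fun a => ψ (π (FreeGroup.of a))) (FreeGroup.mk L) *
        (ψ (π (FreeGroup.mk L)))⁻¹ ∈ (defectSet ψ P ∪ (defectSet ψ P)⁻¹) ^ L.length := by
  set φ := FreeGroup.lift fun a => ψ (π (FreeGroup.of a))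
  induction L using List.reverseRecOn with
  | nil => simp [← FreeGroup.one_eq_mk, hψ]
  | append_singleton L p ih =>
    obtain ⟨a, b⟩ := p
    have hL := hpre L (List.prefix_append _ _)
    have hLp := hpre _ (List.prefix_refl _)
    have ha := hlet (a, b) (by simp)
    have ih := ih (fun L' h => hpre L' (h.trans (List.prefix_append _ _)))
      (fun p hp => hlet p (List.mem_append_left _ hp))
    rw [List.length_append, List.length_singleton, pow_succ, FreeGroup.mk_append_singleton]
    rw [FreeGroup.mk_append_singleton] at hLp
    have hφa : φ (FreeGroup.of a) = ψ (π (FreeGroup.of a)) := FreeGroup.lift_apply_of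
    cases b <;> simp only [cond_false, cond_true, map_mul, map_inv, hφa] at hLp ⊢
    -- For an inverse letter, use the defect at (new prefix, generator), whose product is the old prefix.
    · have hd : ψ (π (FreeGroup.mk L) * (π (FreeGroup.of a))⁻¹) * ψ (π (FreeGroup.of a)) *
          (ψ (π (FreeGroup.mk L)))⁻¹ ∈ defectSet ψ P :=
        ⟨_, _, hLp, ha, by rwa [inv_mul_cancel_right], by rw [inv_mul_cancel_right]⟩
      exact Set.mem_mul.2 ⟨_, ih, _, Or.inr (Set.inv_mem_inv.2 hd), by group⟩
    · exact Set.mem_mul.2 ⟨_, ih, _, Or.inl ⟨_, _, hL, ha, hLp, rfl⟩, by group⟩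

variable [DecidableEq α] [DecidableEq G]

def wordSupport (π : FreeGroup α →* G) (S : Finset (FreeGroup α)) : Finset G :=
  insert 1 (S.biUnion fun w =>
    w.toWord.inits.toFinset.image (fun L => π (FreeGroup.mk L)) ∪
      w.toWord.toFinset.image (fun p => π (FreeGroup.of p.1)))

theorem one_mem_wordSupport (π : FreeGroup α →* G) (S : Finset (FreeGroup α)) :
    (1 : G) ∈ wordSupport π S :=
  Finset.mem_insert_self _ _

theorem map_prefix_mem_wordSupport (π : FreeGroup α →* G) {S : Finset (FreeGroup α)}
    {w : FreeGroup α} (hw : w ∈ S) {L : List (α × Bool)} (hL : L <+: w.toWord) :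
    π (FreeGroup.mk L) ∈ wordSupport π S :=
  Finset.mem_insert_of_mem <| Finset.mem_biUnion.2 ⟨w, hw, Finset.mem_union_left _ <|
    Finset.mem_image_of_mem _ (List.mem_toFinset.2 ((List.mem_inits _ _).2 hL))⟩

theorem map_of_mem_wordSupport (π : FreeGroup α →* G) {S : Finset (FreeGroup α)}
    {w : FreeGroup α} (hw : w ∈ S) {p : α × Bool} (hp : p ∈ w.toWord) :
    π (FreeGroup.of p.1) ∈ wordSupport π S :=
  Finset.mem_insert_of_mem <| Finset.mem_biUnion.2 ⟨w, hw, Finset.mem_union_right _ <|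
    Finset.mem_image_of_mem _ (List.mem_toFinset.2 hp)⟩

theorem map_mem_wordSupport (π : FreeGroup α →* G) {S : Finset (FreeGroup α)}
    {w : FreeGroup α} (hw : w ∈ S) : π w ∈ wordSupport π S := by
  simpa only [FreeGroup.mk_toWord] using map_prefix_mem_wordSupport π hw (List.prefix_refl _)

theorem lift_mul_inv_mem_pow_of_mem (π : FreeGroup α →* G) {ψ : G → H} (hψ : ψ 1 = 1)
    {S : Finset (FreeGroup α)} {w : FreeGroup α} (hw : w ∈ S) :
    FreeGroup.lift (fun a => ψ (π (FreeGroup.of a))) w * (ψ (π w))⁻¹ ∈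
      (defectSet ψ (wordSupport π S) ∪ (defectSet ψ (wordSupport π S))⁻¹) ^
        S.sup fun v => v.toWord.length := by
  refine Set.pow_subset_pow_right
    (Set.mem_union_left _ (one_mem_defectSet hψ (one_mem_wordSupport π S))) (Finset.le_sup (f := fun v => v.toWord.length) hw) ?_
  simpa only [FreeGroup.mk_toWord] using lift_mul_inv_mem_pow_defectSet π hψ w.toWord
    (fun _ hL => map_prefix_mem_wordSupport π hw hL) (fun _ hp => map_of_mem_wordSupport π hw hp)

end Approximation

theorem stmt_19 {α : Type*} (N : Subgroup (FreeGroup α)) [N.Normal]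
    {ι : Type*} (K : ι → Type*) [∀ i, Group (K i)]
    (happrox : ∀ (Φ : Finset (FreeGroup α ⧸ N)) (n : ℕ),
      ∃ (i : ι) (ψ : FreeGroup α ⧸ N → K i),
        ψ 1 = 1 ∧
        (ψ '' ((Φ : Set (FreeGroup α ⧸ N)) \ {1})) ∩
          Cn n {z : K i | ∃ g h : FreeGroup α ⧸ N, g ∈ Φ ∧ h ∈ Φ ∧ g * h ∈ Φ ∧
            z = ψ g * ψ h * (ψ (g * h))⁻¹} = ∅) :
    ∀ (n : ℕ) (Y Φ : Finset (FreeGroup α)),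
      (Y : Set (FreeGroup α)) ⊆ ((N : Set (FreeGroup α)))ᶜ →
      (Φ : Set (FreeGroup α)) ⊆ (N : Set (FreeGroup α)) →
      ∃ (i : ι) (φ : FreeGroup α →* K i),
        ((fun g => φ g) '' (Y : Set (FreeGroup α))) ∩
          Cn n ((fun g => φ g) '' (Φ : Set (FreeGroup α))) = ∅ := by
  classical
  intro n Y Φ hY hΦ
  set π := QuotientGroup.mk' N
  set P := wordSupport π (Y ∪ Φ)
  set m := (Y ∪ Φ).sup fun w => w.toWord.length
  obtain ⟨i, ψ, hψ, hdisj⟩ := happrox P (m * (n + 1))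
  set D := defectSet ψ (P : Set (FreeGroup α ⧸ N))
  set φ := FreeGroup.lift fun a => ψ (π (FreeGroup.of a))
  have herror : ∀ w ∈ Y ∪ Φ, φ w * (ψ (π w))⁻¹ ∈ conjugatesOfSet (D ∪ D⁻¹) ^ m := fun w hw =>
    Set.pow_subset_pow_left subset_conjugatesOfSet (lift_mul_inv_mem_pow_of_mem π hψ hw)
  have hφΦ : (fun g => φ g) '' Φ ⊆ conjugatesOfSet (D ∪ D⁻¹) ^ m := by
    rintro _ ⟨f, hf, rfl⟩
    have hπf : π f = 1 := (QuotientGroup.eq_one_iff f).2 (hΦ hf)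
    simpa [hπf, hψ] using herror f (Finset.mem_union_right _ hf)
  refine ⟨i, φ, Set.eq_empty_of_forall_notMem ?_⟩
  rintro _ ⟨⟨y, hy, rfl⟩, hyC⟩
  have hψy : ψ (π y) ∈ Cn (m * (n + 1)) D := by
    rw [Cn_eq_pow, mul_add_one, add_comm, pow_add]
    refine Set.mem_mul.2 ⟨_, inv_mem_pow_conjugatesOfSet_union_inv
      (herror y (Finset.mem_union_left _ hy)), _, Cn_subset_pow_mul hφΦ n hyC, by group⟩
  have hπy : π y ∈ (P : Set (FreeGroup α ⧸ N)) \ {1} :=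
    ⟨map_mem_wordSupport π (Finset.mem_union_left _ hy),
      fun h => hY hy ((QuotientGroup.eq_one_iff y).1 h)⟩
  exact Set.eq_empty_iff_forall_notMem.1 hdisj _ ⟨⟨_, hπy, rfl⟩, hψy⟩
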